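/- For P = P₁ + P₂ and any context C: type(1n, P, C) = type(n, P₁, C) and type(2n, P, C) = type(n, P₂, C − L(P₁)), where type(m, Q, D) = { w | ∃ w' ∈ D, w' ⊢ Q ⇒ V, V(m) = w }. -/
import Mathlib


/-- Regular expression patterns over an alphabet `A`. -/
inductive Pat (A : Type) : Type
  | eps : Pat A
  | ch : A → Pat A
  | plus : Pat A → Pat A → Pat A
  | cat : Pat A → Pat A → Pat A
  | star : Pat A → Pat A

/-- The language of a pattern (the usual regular-expression language). -/
def Pat.lang {A : Type} : Pat A → Language A
  | .eps => 1
  | .ch a => {[a]}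
  | .plus p q => p.lang + q.lang
  | .cat p q => p.lang * q.lang
  | .star p => KStar.kstar p.lang

/-- Node addresses in the syntax tree of a pattern: `[]` is the root, `1 :: n`
addresses node `n` in the left child, `2 :: n` in the right child. -/
abbrev Node := List ℕ

/-- Bindable nodes: nodes of the syntax tree having no `*`-labeled ancestor
(the root is always bindable; below a `star` nothing is bindable). -/
def Pat.Bindable {A : Type} : Pat A → Node → Prop
  | _, [] => True
  | .plus p _, 1 :: n => p.Bindable n
  | .plus _ q, 2 :: n => q.Bindable n
  | .cat p _, 1 :: n => p.Bindable n
  | .cat _ q, 2 :: n => q.Bindable n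
  | _, _ => False

/-- Associations: a map from node addresses to a matched subword (`some w`) or
`⊥` (`none`). -/
abbrev Assoc (A : Type) := Node → Option (List A)

/-- The association `[λ → w]` binding only the root. -/
def single {A : Type} (w : List A) : Assoc A :=
  fun n => if n = [] then some w else none

/-- `V + P₂`: push the associations of `V` into the left branch of a
disjunction; all nodes of the right branch get `⊥`. -/
def orL {A : Type} (V : Assoc A) : Assoc A
  | [] => V []
  | 1 :: m => V m
  | _ => none

/-- `P₁ + V`: push the associations of `V` into the right branch of a
disjunction; all nodes of the left branch get `⊥`. -/
def orR {A : Type} (V : Assoc A) : Assoc A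
  | [] => V []
  | 2 :: m => V m
  | _ => none

/-- `V₁ · V₂`: the association for a concatenation node. -/
def catA {A : Type} (V₁ V₂ : Assoc A) : Assoc A
  | [] => match V₁ [], V₂ [] with
          | some u, some v => some (u ++ v)
          | _, _ => none
  | 1 :: m => V₁ m
  | 2 :: m => V₂ m
  | _ => none

mutual
/-- The matching relation `w ⊢ P ⇒ V` of the paper's Figure 2, with the
first-match policy for `+` (rules Or2/COr2) and the longest-match policy for
Kleene star in a concatenation (rule CKleene). -/
inductive Match {A : Type} : List A → Pat A → Assoc A → Prop
  | empty : Match [] .eps (single [])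
  | lab (a : A) : Match [a] (.ch a) (single [a])
  | kleeneEmpty (P : Pat A) : Match [] (.star P) (single [])
  | kleeneClosure {w₁ w₂ : List A} {P : Pat A} {V₁ V₂ : Assoc A} :
      Match w₁ P V₁ → Match w₂ (.star P) V₂ → w₁ ≠ [] →
      Match (w₁ ++ w₂) (.star P) (single (w₁ ++ w₂))
  | or1 {w : List A} {P₁ P₂ : Pat A} {V : Assoc A} :
      Match w P₁ V → Match w (.plus P₁ P₂) (orL V)
  | or2 {w : List A} {P₁ P₂ : Pat A} {V : Assoc A} :
      Match w P₂ V → w ∉ P₁.lang → Match w (.plus P₁ P₂) (orR V)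
  | celem {w₁ w₂ : List A} {P₁ P₂ : Pat A} {V₁ V₂ : Assoc A} :
      CMatch w₁ w₂ P₁ P₂ V₁ V₂ → Match (w₁ ++ w₂) (.cat P₁ P₂) (catA V₁ V₂)

/-- The auxiliary relation `(w₁, w₂) ⊢ P₁ · P₂ ⇒ (V₁, V₂)`: when matching
`w₁w₂` against `P₁ · P₂`, pattern `P₁` matches `w₁` yielding `V₁` and `P₂`
matches `w₂` yielding `V₂`. -/
inductive CMatch {A : Type} : List A → List A → Pat A → Pat A → Assoc A → Assoc A → Prop
  | cempty {w : List A} {P : Pat A} {V₂ : Assoc A} :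
      Match w P V₂ → CMatch [] w .eps P (single []) V₂
  | clab {a : A} {w : List A} {P : Pat A} {V₁ V₂ : Assoc A} :
      Match [a] (.ch a) V₁ → Match w P V₂ → CMatch [a] w (.ch a) P V₁ V₂
  | cor1 {w₁ w₂ : List A} {P₁ P₂ P₃ : Pat A} {V₁ V₂ : Assoc A} :
      CMatch w₁ w₂ P₁ P₃ V₁ V₂ →
      CMatch w₁ w₂ (.plus P₁ P₂) P₃ (orL V₁) V₂
  | cor2 {w₁ w₂ : List A} {P₁ P₂ P₃ : Pat A} {V₁ V₂ : Assoc A} :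
      CMatch w₁ w₂ P₂ P₃ V₁ V₂ → w₁ ++ w₂ ∉ (Pat.cat P₁ P₃).lang →
      CMatch w₁ w₂ (.plus P₁ P₂) P₃ (orR V₁) V₂
  | ccon {w₁ w₂ w₃ : List A} {P₁ P₂ P₃ : Pat A} {V₁ V₂ V₃ W : Assoc A} :
      CMatch w₁ (w₂ ++ w₃) P₁ (.cat P₂ P₃) V₁ W →
      CMatch w₂ w₃ P₂ P₃ V₂ V₃ →
      CMatch (w₁ ++ w₂) w₃ (.cat P₁ P₂) P₃ (catA V₁ V₂) V₃
  | ckleene {w₁ w₂ : List A} {P₁ P₂ : Pat A} {V₁ V₂ : Assoc A} :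
      Match w₁ (.star P₁) V₁ → Match w₂ P₂ V₂ →
      (¬ ∃ w₃ w₄, w₃ ≠ [] ∧ w₂ = w₃ ++ w₄ ∧
        w₁ ++ w₃ ∈ (Pat.star P₁).lang ∧ w₄ ∈ P₂.lang) →
      CMatch w₁ w₂ (.star P₁) P₂ V₁ V₂
end

/-- The type of node `n` of pattern `P` relative to a context language `C`:
all subwords that `n` can be associated with when matching a word of `C`
against `P`. -/
def typeOf {A : Type} (n : Node) (P : Pat A) (C : Set (List A)) : Set (List A) :=
  {w | ∃ w' ∈ C, ∃ V, Match w' P V ∧ V n = some w}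

/-- For `P = P₁ + P₂`:
`type(1n, P, C) = type(n, P₁, C)` and
`type(2n, P, C) = type(n, P₂, C − L(P₁))`. -/
theorem typeOf_plus {A : Type} (P₁ P₂ : Pat A) (C : Set (List A)) (n : Node) :
    typeOf (1 :: n) (Pat.plus P₁ P₂) C = typeOf n P₁ C ∧
    typeOf (2 :: n) (Pat.plus P₁ P₂) C =
      typeOf n P₂ (C \ (P₁.lang : Set (List A))) := by
  constructor
  · ext w
    constructor
    · rintro ⟨w', hw', V, hM, hV⟩
      cases hM with
      | or1 h => exact ⟨w', hw', _, h, hV⟩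
      | or2 h hn => simp [orR] at hV
    · rintro ⟨w', hw', V, hM, hV⟩
      exact ⟨w', hw', orL V, Match.or1 hM, hV⟩
  · ext w
    constructor
    · rintro ⟨w', hw', V, hM, hV⟩
      cases hM with
      | or1 h => simp [orL] at hV
      | or2 h hn => exact ⟨w', ⟨hw', hn⟩, _, h, hV⟩
    · rintro ⟨w', ⟨hw', hn⟩, V, hM, hV⟩
      exact ⟨w', hw', orR V, Match.or2 hM hn, hV⟩
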